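/- Let λ ∈ (0,1), and let (P_k) be a nondecreasing nonnegative sequence and (M_k), (η_k) nonnegative sequences with P_k = ∑_{i=0}^k M_i/λⁱ. Suppose M_{i+1}/λ^{i+1} ≤ (1/4) M_i/λⁱ + η_i/λ^{i+1} for all i ≥ k₀, and ∑_{i=k₀}^k η_i/λ^{i+1} ≤ D + (1/2) P_{k+1} for all k ≥ k₀, where D ≥ 0 is a constant. Then P_{k+1} ≤ 4D + 4P_{k₀} for all k ≥ k₀; in particular (P_k) is bounded and ∑_{i=0}^∞ M_i/λⁱ converges. -/
import Mathlib


/-- If P_k = ∑_{i≤k} M_i/λⁱ satisfies the iteration inequalities of the paper, then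
P_{k+1} ≤ 4D + 4P_{k₀} for all k ≥ k₀; in particular (P_k) is bounded and
∑ M_i/λⁱ converges. -/
theorem partial_sums_bounded (lam D : ℝ) (k₀ : ℕ)
    (hlam : 0 < lam) (hlam1 : lam < 1) (hD : 0 ≤ D) (hk₀ : 1 ≤ k₀)
    (M η P : ℕ → ℝ)
    (hM : ∀ i, 0 ≤ M i) (hη : ∀ i, 0 ≤ η i)
    (hP : ∀ k, P k = ∑ i ∈ Finset.range (k + 1), M i / lam ^ i)
    (hrec : ∀ i, k₀ ≤ i →
      M (i + 1) / lam ^ (i + 1) ≤ (1 / 4) * (M i / lam ^ i) + η i / lam ^ (i + 1))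
    (hηsum : ∀ k, k₀ ≤ k →
      (∑ i ∈ Finset.Icc k₀ k, η i / lam ^ (i + 1)) ≤ D + (1 / 2) * P (k + 1)) :
    (∀ k, k₀ ≤ k → P (k + 1) ≤ 4 * D + 4 * P k₀) ∧
      BddAbove (Set.range P) ∧
      Summable (fun i : ℕ => M i / lam ^ i) := by
  set a : ℕ → ℝ := fun i => M i / lam ^ i with ha
  have ha0 : ∀ i, 0 ≤ a i := fun i => div_nonneg (hM i) (pow_pos hlam i).le
  have hPmono : ∀ j k : ℕ, j ≤ k → P j ≤ P k := by
    intro j k hjk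
    rw [hP j, hP k]
    exact Finset.sum_le_sum_of_subset_of_nonneg
      (Finset.range_subset_range.2 (by omega)) (fun i _ _ => ha0 i)
  have hP0 : ∀ k, 0 ≤ P k := by
    intro k
    rw [hP k]
    exact Finset.sum_nonneg fun i _ => ha0 i
  have main : ∀ k, k₀ ≤ k → P (k + 1) ≤ 4 * D + 4 * P k₀ := by
    intro k hk
    -- split P (k+1)
    have hsplit : P (k + 1) = P k₀ + ∑ i ∈ Finset.Icc k₀ k, a (i + 1) := by
      rw [hP, hP]
      have h1 : (∑ i ∈ Finset.range (k₀ + 1), a i)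
          + ∑ i ∈ Finset.Ico (k₀ + 1) (k + 2), a i
          = ∑ i ∈ Finset.range (k + 2), a i :=
        Finset.sum_range_add_sum_Ico a (by omega)
      have h2 : ∑ i ∈ Finset.Ico (k₀ + 1) (k + 2), a i
          = ∑ i ∈ Finset.Icc k₀ k, a (i + 1) := by
        rw [← Finset.Ico_add_one_right_eq_Icc, Finset.sum_Ico_eq_sum_range,
          Finset.sum_Ico_eq_sum_range]
        have : k + 2 - (k₀ + 1) = k + 1 - k₀ := by omega
        rw [this]
        exact Finset.sum_congr rfl fun i _ => by ring_nf
      linarith [h1, h2]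
    have hsum1 : ∑ i ∈ Finset.Icc k₀ k, a (i + 1)
        ≤ ∑ i ∈ Finset.Icc k₀ k, ((1 / 4) * a i + η i / lam ^ (i + 1)) :=
      Finset.sum_le_sum fun i hi => hrec i (Finset.mem_Icc.1 hi).1
    have hsum2 : ∑ i ∈ Finset.Icc k₀ k, a i ≤ P (k + 1) := by
      rw [hP]
      exact Finset.sum_le_sum_of_subset_of_nonneg
        (fun i hi => Finset.mem_range.2 (by have := (Finset.mem_Icc.1 hi).2; omega))
        (fun i _ _ => ha0 i)
    rw [Finset.sum_add_distrib, ← Finset.mul_sum] at hsum1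
    have hη' := hηsum k hk
    nlinarith [hsum1, hsum2, hη', hsplit, hP0 (k + 1), hP0 k₀]
  refine ⟨main, ?_, ?_⟩
  · refine ⟨4 * D + 4 * P k₀, ?_⟩
    rintro x ⟨k, rfl⟩
    rcases le_or_gt k k₀ with h | h
    · calc P k ≤ P k₀ := hPmono k k₀ h
        _ ≤ 4 * D + 4 * P k₀ := by nlinarith [hP0 k₀]
    · obtain ⟨j, rfl⟩ : ∃ j, k = j + 1 := ⟨k - 1, by omega⟩
      exact main j (by omega)
  · refine summable_of_sum_range_le (c := 4 * D + 4 * P k₀) ha0 fun n => ?_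
    calc ∑ i ∈ Finset.range n, a i ≤ ∑ i ∈ Finset.range (n + 1), a i :=
          Finset.sum_le_sum_of_subset_of_nonneg
            (Finset.range_subset_range.2 (by omega)) (fun i _ _ => ha0 i)
      _ = P n := (hP n).symm
      _ ≤ 4 * D + 4 * P k₀ := by
          rcases le_or_gt n k₀ with h | h
          · calc P n ≤ P k₀ := hPmono n k₀ h
              _ ≤ 4 * D + 4 * P k₀ := by nlinarith [hP0 k₀]
          · obtain ⟨j, rfl⟩ : ∃ j, n = j + 1 := ⟨n - 1, by omega⟩
            exact main j (by omega)
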